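/- Let k01, k10 : ℝ → ℝ be nonnegative continuously differentiable functions, A = −(k01 + k10), let 𝒟 = [a,b] be compact with A(v) ≤ −ν < 0 on 𝒟, and set g₀ = max_{v ∈ 𝒟} k01(v), g₂ = max_{v ∈ 𝒟} |A'(v)|. Let w : (−∞,0] → (0,1] be measurable with ∫_{−∞}^0 e^{ν s}/w_s ds < ∞. Then for any measurable V, V' : (−∞,0] → 𝒟, the quantity H₁(V,V') = ∫_{−∞}^0 | exp(∫_τ^0 A(V_s) ds) − exp(∫_τ^0 A(V'_s) ds) | · k01(V_τ) dτ satisfies H₁(V,V') ≤ (g₀ g₂ / ν) · ( ∫_{−∞}^0 e^{ν s}/w_s ds ) · ‖V − V'‖_w. -/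

import Mathlib

/-! For `τ ≤ 0` both exponents `∫_τ^0 A(V_s) ds` are at most `ντ` because `A ≤ -ν` on `𝒟`, so the
mean value theorem for `exp` and the Lipschitz bound `|A'| ≤ g₂` give
`|exp (∫_τ^0 A(V)) - exp (∫_τ^0 A(V'))| ≤ g₂ e^{ντ} ∫_τ^0 |V_s - V'_s| ds`.
Multiplying by `k01 ≤ g₀`, integrating over `τ ≤ 0` and exchanging the order of integration turns
`∫ e^{ντ} ∫_τ^0 |V_s - V'_s| ds dτ` into `ν⁻¹ ∫ e^{νs} |V_s - V'_s| ds`, and finally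
`|V_s - V'_s| ≤ ‖V - V'‖_w / w_s`. -/

open MeasureTheory Real Set

lemma abs_exp_sub_exp_le_of_le {x y c : ℝ} (hx : x ≤ c) (hy : y ≤ c) :
    |exp x - exp y| ≤ exp c * |x - y| := by
  simpa only [Real.norm_eq_abs] using (convex_Iic c).norm_image_sub_le_of_norm_deriv_le
    (fun z _ => differentiableAt_exp) (fun z hz => by simpa using exp_le_exp.2 hz) hy hx

lemma integrableOn_comp_of_mapsTo {α E : Type*} [MeasurableSpace α] {μ : Measure α}
    [TopologicalSpace E] [MeasurableSpace E] [OpensMeasurableSpace E] {K : Set E}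
    (hK : IsCompact K) {f : E → ℝ} (hf : Continuous f) {V : α → E} (hV : Measurable V)
    {s : Set α} (hs : MeasurableSet s) (hμs : μ s ≠ ⊤) (hVs : MapsTo V s K) :
    IntegrableOn (fun x => f (V x)) s μ := by
  obtain ⟨C, hC⟩ := hK.exists_bound_of_continuousOn hf.continuousOn
  exact Measure.integrableOn_of_bounded hμs (hf.measurable.comp hV).aestronglyMeasurable
    ((ae_restrict_iff' hs).2 (ae_of_all _ fun x hx => hC _ (hVs hx)))

section ExpWeightedFubini

variable {ν c : ℝ} {g : ℝ → ℝ}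

lemma integral_Iic_ite_lt (τ : ℝ) (y : ℝ) :
    ∫ s in Iic c, (if τ < s then y * g s else 0) = y * ∫ s in Ioc τ c, g s := by
  have : (fun s => if τ < s then y * g s else 0) = (Ioi τ).indicator fun s => y * g s := by
    ext s; simp [indicator_apply]
  rw [this, integral_indicator measurableSet_Ioi, Measure.restrict_restrict measurableSet_Ioi,
    Ioi_inter_Iic, integral_const_mul]

lemma integral_Iic_ite_lt_exp_mul (hν : 0 < ν) {s : ℝ} (hs : s ≤ c) (y : ℝ) :
    ∫ τ in Iic c, (if τ < s then exp (ν * τ) * y else 0) = exp (ν * s) / ν * y := by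
  have : (fun τ => if τ < s then exp (ν * τ) * y else 0)
      = (Iio s).indicator fun τ => exp (ν * τ) * y := by
    ext τ; simp [indicator_apply]
  rw [this, integral_indicator measurableSet_Iio, Measure.restrict_restrict measurableSet_Iio,
    inter_eq_left.2 (Iio_subset_Iic_self.trans (Iic_subset_Iic.2 hs)),
    ← integral_Iic_eq_integral_Iio, integral_mul_const, integral_exp_mul_Iic hν]

lemma integrable_ite_lt_exp_mul (hν : 0 < ν)
    (hg : IntegrableOn (fun s => exp (ν * s) * g s) (Iic c)) :
    Integrable (fun p : ℝ × ℝ => if p.1 < p.2 then exp (ν * p.1) * g p.2 else 0)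
      ((volume.restrict (Iic c)).prod (volume.restrict (Iic c))) := by
  have hgm : AEStronglyMeasurable g (volume.restrict (Iic c)) := by
    have hexp : Continuous fun s : ℝ => exp (-ν * s) := by fun_prop
    refine (hexp.aestronglyMeasurable.mul hg.aestronglyMeasurable).congr (ae_of_all _ fun s => ?_)
    simp [← mul_assoc, ← exp_add]
  have hm : AEStronglyMeasurable (fun p : ℝ × ℝ => if p.1 < p.2 then exp (ν * p.1) * g p.2 else 0)
      ((volume.restrict (Iic c)).prod (volume.restrict (Iic c))) := by
    have hexp : Continuous fun τ : ℝ => exp (ν * τ) := by fun_prop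
    have hprod := (hexp.aestronglyMeasurable (μ := volume.restrict (Iic c))).comp_fst.mul
      (hgm.comp_snd (μ := volume.restrict (Iic c)))
    refine (hprod.indicator (measurableSet_lt measurable_fst measurable_snd)).congr
      (ae_of_all _ fun p => ?_)
    simp [indicator_apply]
  refine (integrable_prod_iff' hm).2 ⟨?_, ?_⟩
  · refine ae_of_all _ fun s => ?_
    have hslice := ((integrableOn_exp_mul_Iic hν c).mul_const (g s)).indicator
      (measurableSet_Iio (a := s))
    refine hslice.congr (ae_of_all _ fun τ => ?_)
    simp [indicator_apply]
  · have hnorm : ∀ τ s, ‖if τ < s then exp (ν * τ) * g s else 0‖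
        = if τ < s then exp (ν * τ) * |g s| else 0 := fun τ s => by
      split_ifs <;> simp [abs_of_pos (exp_pos _)]
    refine (hg.norm.div_const ν).congr ?_
    filter_upwards [ae_restrict_mem measurableSet_Iic] with s hs
    simp only [hnorm, integral_Iic_ite_lt_exp_mul hν hs, norm_mul, norm_of_nonneg (exp_pos _).le,
      Real.norm_eq_abs]
    ring

lemma integrableOn_exp_mul_integral_Ioc (hν : 0 < ν)
    (hg : IntegrableOn (fun s => exp (ν * s) * g s) (Iic c)) :
    IntegrableOn (fun τ => exp (ν * τ) * ∫ s in Ioc τ c, g s) (Iic c) := by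
  simpa only [IntegrableOn, integral_Iic_ite_lt] using
    (integrable_ite_lt_exp_mul hν hg).integral_prod_left

lemma integral_exp_mul_integral_Ioc (hν : 0 < ν)
    (hg : IntegrableOn (fun s => exp (ν * s) * g s) (Iic c)) :
    ∫ τ in Iic c, exp (ν * τ) * ∫ s in Ioc τ c, g s = (∫ s in Iic c, exp (ν * s) * g s) / ν := by
  simp_rw [← integral_Iic_ite_lt]
  rw [integral_integral_swap (integrable_ite_lt_exp_mul hν hg), ← integral_div]
  refine setIntegral_congr_fun measurableSet_Iic fun s hs => ?_
  rw [integral_Iic_ite_lt_exp_mul hν hs]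
  ring

end ExpWeightedFubini

lemma ae_abs_sub_le_essSup_div {α : Type*} [MeasurableSpace α] {μ : Measure α} {s : Set α}
    (hs : MeasurableSet s) {w V V' : α → ℝ} {a b : ℝ} (hw : ∀ t ∈ s, 0 < w t ∧ w t ≤ 1)
    (hV : ∀ t ∈ s, V t ∈ Icc a b) (hV' : ∀ t ∈ s, V' t ∈ Icc a b) :
    ∀ᵐ t ∂μ.restrict s,
      |V t - V' t| ≤ essSup (fun t => w t * |V t - V' t|) (μ.restrict s) / w t := by
  -- `essSup` of a real function that is not bounded above is a junk value.
  have hbdd : Filter.IsBoundedUnder (· ≤ ·) (ae (μ.restrict s)) fun t => w t * |V t - V' t| := by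
    refine ⟨b - a, Filter.eventually_map.2 ?_⟩
    filter_upwards [ae_restrict_mem hs] with t ht
    obtain ⟨⟨hVa, hVb⟩, ⟨hV'a, hV'b⟩⟩ := And.intro (hV t ht) (hV' t ht)
    calc w t * |V t - V' t| ≤ 1 * |V t - V' t| := by gcongr; exact (hw t ht).2
      _ ≤ b - a := by rw [one_mul, abs_sub_le_iff]; constructor <;> linarith
  filter_upwards [ae_le_essSup hbdd, ae_restrict_mem hs] with t ht hts
  rwa [le_div_iff₀ (hw t hts).1, mul_comm]

lemma abs_exp_integral_comp_sub_le {f V V' : ℝ → ℝ} {a b ν L τ : ℝ} (hf : Continuous f)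
    (hfν : ∀ v ∈ Icc a b, f v ≤ -ν)
    (hfL : ∀ u ∈ Icc a b, ∀ v ∈ Icc a b, |f u - f v| ≤ L * |u - v|)
    (hVm : Measurable V) (hV'm : Measurable V') (hτ : τ ≤ 0)
    (hV : ∀ s ∈ Icc τ 0, V s ∈ Icc a b) (hV' : ∀ s ∈ Icc τ 0, V' s ∈ Icc a b) :
    |exp (∫ s in τ..0, f (V s)) - exp (∫ s in τ..0, f (V' s))| ≤
      exp (ν * τ) * (L * ∫ s in Ioc τ 0, |V s - V' s|) := by
  have hint : ∀ U : ℝ → ℝ, Measurable U → (∀ s ∈ Icc τ 0, U s ∈ Icc a b) →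
      IntervalIntegrable (fun s => f (U s)) volume τ 0 := fun U hUm hU =>
    (intervalIntegrable_iff_integrableOn_Ioc_of_le hτ).2 <|
      integrableOn_comp_of_mapsTo isCompact_Icc hf hUm measurableSet_Ioc measure_Ioc_lt_top.ne
        fun s hs => hU s (Ioc_subset_Icc_self hs)
  have hle : ∀ U : ℝ → ℝ, Measurable U → (∀ s ∈ Icc τ 0, U s ∈ Icc a b) →
      ∫ s in τ..0, f (U s) ≤ ν * τ := fun U hUm hU => by
    have := intervalIntegral.integral_mono_on hτ (hint U hUm hU) intervalIntegrable_const
      fun s hs => hfν _ (hU s hs)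
    simpa [mul_comm] using this
  have hΔ : IntegrableOn (fun s => |V s - V' s|) (Ioc τ 0) :=
    integrableOn_comp_of_mapsTo (isCompact_Icc.prod isCompact_Icc)
      (continuous_abs.comp (continuous_fst.sub continuous_snd)) (hVm.prodMk hV'm)
      measurableSet_Ioc measure_Ioc_lt_top.ne
      fun s hs => ⟨hV s (Ioc_subset_Icc_self hs), hV' s (Ioc_subset_Icc_self hs)⟩
  have hdiff : |(∫ s in τ..0, f (V s)) - ∫ s in τ..0, f (V' s)|
      ≤ L * ∫ s in Ioc τ 0, |V s - V' s| := by
    rw [← intervalIntegral.integral_sub (hint V hVm hV) (hint V' hV'm hV'),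
      intervalIntegral.integral_of_le hτ, ← integral_const_mul]
    refine (abs_integral_le_integral_abs).trans <| setIntegral_mono_on
      (((hint V hVm hV).sub (hint V' hV'm hV')).1.abs) (hΔ.const_mul L) measurableSet_Ioc
      fun s hs => hfL _ (hV s (Ioc_subset_Icc_self hs)) _ (hV' s (Ioc_subset_Icc_self hs))
  calc _ ≤ exp (ν * τ) * |(∫ s in τ..0, f (V s)) - ∫ s in τ..0, f (V' s)| :=
        abs_exp_sub_exp_le_of_le (hle V hVm hV) (hle V' hV'm hV')
    _ ≤ _ := by gcongr

theorem dms_H1_bound_general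
    (k01 k10 A : ℝ → ℝ)
    (hk01 : ContDiff ℝ 1 k01) (hk10 : ContDiff ℝ 1 k10)
    (hk01n : ∀ v, 0 ≤ k01 v)
    (hA : ∀ v, A v = -(k01 v + k10 v))
    (a b ν : ℝ) (hν : 0 < ν)
    (hAν : ∀ v ∈ Set.Icc a b, A v ≤ -ν)
    (g₀ g₂ : ℝ)
    (hg₀ : IsGreatest (k01 '' Set.Icc a b) g₀)
    (hg₂ : IsGreatest ((fun v => |deriv A v|) '' Set.Icc a b) g₂)
    (w : ℝ → ℝ)
    (hw : ∀ t ≤ (0 : ℝ), 0 < w t ∧ w t ≤ 1)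
    (hwint : IntegrableOn (fun s => Real.exp (ν * s) / w s) (Set.Iic 0))
    (V V' : ℝ → ℝ) (hVm : Measurable V) (hV'm : Measurable V')
    (hV : ∀ t ≤ (0 : ℝ), V t ∈ Set.Icc a b)
    (hV' : ∀ t ≤ (0 : ℝ), V' t ∈ Set.Icc a b) :
    (∫ τ in Set.Iic (0 : ℝ),
        |Real.exp (∫ s in τ..0, A (V s)) - Real.exp (∫ s in τ..0, A (V' s))| *
          k01 (V τ)) ≤
      (g₀ * g₂ / ν) * (∫ s in Set.Iic (0 : ℝ), Real.exp (ν * s) / w s) *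
        essSup (fun t => w t * |V t - V' t|) (volume.restrict (Set.Iic (0 : ℝ))) := by
  set M := essSup (fun t => w t * |V t - V' t|) (volume.restrict (Iic (0 : ℝ)))
  have hAd : ContDiff ℝ 1 A := funext hA ▸ (hk01.add hk10).neg
  have hAL : ∀ u ∈ Icc a b, ∀ v ∈ Icc a b, |A u - A v| ≤ g₂ * |u - v| := fun u hu v hv => by
    simpa only [Real.norm_eq_abs] using (convex_Icc a b).norm_image_sub_le_of_norm_deriv_le
      (fun x _ => (hAd.differentiable one_ne_zero).differentiableAt)
      (fun x hx => hg₂.2 (mem_image_of_mem _ hx)) hv hu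
  have hg₀g₂ : 0 ≤ g₀ * g₂ :=
    mul_nonneg ((hk01n _).trans (hg₀.2 (mem_image_of_mem _ (hV 0 le_rfl))))
      ((abs_nonneg _).trans (hg₂.2 (mem_image_of_mem _ (hV 0 le_rfl))))
  have hM : ∀ᵐ s ∂volume.restrict (Iic 0), exp (ν * s) * |V s - V' s| ≤ M * (exp (ν * s) / w s) :=
    (ae_abs_sub_le_essSup_div measurableSet_Iic hw hV hV').mono fun s hs => by
      rw [mul_div_left_comm]; gcongr
  have hΔ : IntegrableOn (fun s => exp (ν * s) * |V s - V' s|) (Iic 0) :=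
    (hwint.const_mul M).mono' (by fun_prop) <| hM.mono fun s hs => by
      rwa [Real.norm_of_nonneg (by positivity)]
  have hpt : ∀ τ ∈ Iic (0 : ℝ),
      |exp (∫ s in τ..0, A (V s)) - exp (∫ s in τ..0, A (V' s))| * k01 (V τ) ≤
        g₀ * g₂ * (exp (ν * τ) * ∫ s in Ioc τ 0, |V s - V' s|) := fun τ hτ => by
    have := abs_exp_integral_comp_sub_le hAd.continuous hAν hAL hVm hV'm hτ
      (fun s hs => hV s hs.2) (fun s hs => hV' s hs.2)
    exact (mul_le_mul this (hg₀.2 (mem_image_of_mem _ (hV τ hτ))) (hk01n _)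
      ((abs_nonneg _).trans this)).trans_eq (by ring)
  calc _ ≤ ∫ τ in Iic 0, g₀ * g₂ * (exp (ν * τ) * ∫ s in Ioc τ 0, |V s - V' s|) :=
        integral_mono_of_nonneg
          (ae_of_all _ fun τ => mul_nonneg (abs_nonneg _) (hk01n _))
          ((integrableOn_exp_mul_integral_Ioc hν hΔ).const_mul _)
          (ae_restrict_of_forall_mem measurableSet_Iic hpt)
    _ = g₀ * g₂ * ((∫ s in Iic 0, exp (ν * s) * |V s - V' s|) / ν) := by
        rw [integral_const_mul, integral_exp_mul_integral_Ioc hν hΔ]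
    _ ≤ g₀ * g₂ * ((∫ s in Iic 0, M * (exp (ν * s) / w s)) / ν) := by
        gcongr g₀ * g₂ * (?_ / _)
        exact integral_mono_ae hΔ (hwint.const_mul M) hM
    _ = _ := by rw [integral_const_mul]; ring

/-- bound on the term `H₁` in the proof of Theorem 1: with
`A = −(k01 + k10)`, inputs valued in `𝒟 = [a,b]` where `A ≤ −ν < 0`,
`g₀ = max_𝒟 k01`, `g₂ = max_𝒟 |A'|`, and a weighting function
`w : (−∞,0] → (0,1]` with `∫_{−∞}^0 e^{νs}/w_s ds < ∞`, one has
`H₁(V,V') ≤ (g₀ g₂ / ν)·(∫_{−∞}^0 e^{νs}/w_s ds)·‖V − V'‖_w`. -/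
theorem dms_H1_bound
    (k01 k10 A : ℝ → ℝ)
    (hk01 : ContDiff ℝ 1 k01) (hk10 : ContDiff ℝ 1 k10)
    (hk01n : ∀ v, 0 ≤ k01 v) (hk10n : ∀ v, 0 ≤ k10 v)
    (hA : ∀ v, A v = -(k01 v + k10 v))
    (a b ν : ℝ) (hab : a ≤ b) (hν : 0 < ν)
    (hAν : ∀ v ∈ Set.Icc a b, A v ≤ -ν)
    (g₀ g₂ : ℝ)
    (hg₀ : IsGreatest (k01 '' Set.Icc a b) g₀)
    (hg₂ : IsGreatest ((fun v => |deriv A v|) '' Set.Icc a b) g₂)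
    (w : ℝ → ℝ) (hwm : Measurable w)
    (hw : ∀ t ≤ (0 : ℝ), 0 < w t ∧ w t ≤ 1)
    (hwint : IntegrableOn (fun s => Real.exp (ν * s) / w s) (Set.Iic 0))
    (V V' : ℝ → ℝ) (hVm : Measurable V) (hV'm : Measurable V')
    (hV : ∀ t ≤ (0 : ℝ), V t ∈ Set.Icc a b)
    (hV' : ∀ t ≤ (0 : ℝ), V' t ∈ Set.Icc a b) :
    (∫ τ in Set.Iic (0 : ℝ),
        |Real.exp (∫ s in τ..0, A (V s)) - Real.exp (∫ s in τ..0, A (V' s))| *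
          k01 (V τ)) ≤
      (g₀ * g₂ / ν) * (∫ s in Set.Iic (0 : ℝ), Real.exp (ν * s) / w s) *
        essSup (fun t => w t * |V t - V' t|) (volume.restrict (Set.Iic (0 : ℝ))) :=
  dms_H1_bound_general k01 k10 A hk01 hk10 hk01n hA a b ν hν hAν g₀ g₂ hg₀ hg₂ w hw hwint V V' hVm
    hV'm hV hV'
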